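/- arXiv:2510.15108 — 7 statements merged into one kernel-verified Lean document; each statement's English description precedes it below -/
import Mathlib

section
/- The kernel 𝕂_{sp} = {w ∈ ZMod (s*p) : w^(2^i) = 1 for some natural number i} has exactly 2^(k+l) elements. -/
/-!
By the Chinese remainder theorem, `ZMod (s*p) ≃ ZMod s × ZMod p`, and the set of elements
killed by some power of `2` splits accordingly. In a finite field with `2^a * c + 1` elements,
`c` odd, such an element has order dividing both `2^i` and `2^a * c`, hence dividing `2^a`;
since the unit group is cyclic of order `2^a * c`, exactly `2^a` elements satisfy `x ^ 2^a = 1`.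
-/

/-- The kernel `𝕂_{sp}`: elements some iterated square of which equals `1`. -/
def Ksp (s p : ℕ) : Set (ZMod (s*p)) := {w | ∃ i : ℕ, w ^ (2 ^ i) = 1}

def twoPowerTorsion (M : Type*) [Monoid M] : Set M := {x | ∃ i : ℕ, x ^ 2 ^ i = 1}

theorem twoPowerTorsion_prod {M N : Type*} [Monoid M] [Monoid N] :
    twoPowerTorsion (M × N) = twoPowerTorsion M ×ˢ twoPowerTorsion N := by
  ext ⟨x, y⟩
  constructor
  · rintro ⟨i, h⟩
    exact ⟨⟨i, congrArg Prod.fst h⟩, ⟨i, congrArg Prod.snd h⟩⟩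
  · rintro ⟨⟨i, hx⟩, ⟨j, hy⟩⟩
    refine ⟨i + j, Prod.ext ?_ ?_⟩
    · simp only [Prod.pow_fst, Prod.fst_one, pow_add, pow_mul, hx, one_pow]
    · simp only [Prod.pow_snd, Prod.snd_one, pow_add, pow_mul', hy, one_pow]

theorem MulEquiv.preimage_twoPowerTorsion {M N : Type*} [Monoid M] [Monoid N] (e : M ≃* N) :
    e ⁻¹' twoPowerTorsion N = twoPowerTorsion M := by
  ext x
  simp only [twoPowerTorsion, Set.mem_preimage, Set.mem_ofPred_eq, ← map_pow,
    map_eq_one_iff e e.injective]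

theorem MulEquiv.ncard_twoPowerTorsion {M N : Type*} [Monoid M] [Monoid N] (e : M ≃* N) :
    (twoPowerTorsion M).ncard = (twoPowerTorsion N).ncard := by
  rw [← e.preimage_twoPowerTorsion,
    Set.ncard_preimage_of_injective_subset_range e.injective (by simp [e.surjective.range_eq])]

theorem pow_two_pow_eq_one_of_pow_mul_odd_eq_one {M : Type*} [Monoid M] {x : M}
    {a c i : ℕ} (hc : Odd c) (hxi : x ^ 2 ^ i = 1) (hxc : x ^ (2 ^ a * c) = 1) :
    x ^ 2 ^ a = 1 := by
  have hcop : (orderOf x).Coprime c :=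
    Nat.Coprime.coprime_dvd_left (orderOf_dvd_of_pow_eq_one hxi)
      (Nat.Coprime.pow_left _ (Nat.coprime_two_left.mpr hc))
  exact orderOf_dvd_iff_pow_eq_one.mp (hcop.dvd_of_dvd_mul_right (orderOf_dvd_of_pow_eq_one hxc))

namespace FiniteField

variable {K : Type*} [Field K] [Fintype K]

theorem twoPowerTorsion_eq {a c : ℕ} (hc : Odd c) (hK : Fintype.card K = 2 ^ a * c + 1) :
    twoPowerTorsion K = {x | x ^ 2 ^ a = 1} := by
  ext x
  refine ⟨fun ⟨i, hxi⟩ => ?_, fun hx => ⟨a, hx⟩⟩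
  have hx0 : x ≠ 0 := by rintro rfl; simp at hxi
  have hxc : x ^ (2 ^ a * c) = 1 := by
    simpa [hK] using pow_card_sub_one_eq_one x hx0
  exact pow_two_pow_eq_one_of_pow_mul_odd_eq_one hc hxi hxc

theorem ncard_pow_eq_one_of_dvd {n : ℕ} (hn : n ∣ Fintype.card K - 1) :
    {x : K | x ^ n = 1}.ncard = n := by
  classical
  obtain ⟨g, hg⟩ := IsCyclic.exists_ofOrder_eq_natCard (α := Kˣ)
  rw [Nat.card_eq_fintype_card, Fintype.card_units] at hg
  have hζ : IsPrimitiveRoot (g : K) (Fintype.card K - 1) :=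
    IsPrimitiveRoot.coe_units_iff.mpr (hg ▸ IsPrimitiveRoot.orderOf g)
  obtain ⟨m, hm⟩ := hn
  have hpos : 0 < Fintype.card K - 1 := by
    have := Fintype.one_lt_card (α := K); omega
  have hn0 : 0 < n := Nat.pos_of_mul_pos_right (hm ▸ hpos)
  have hζn : IsPrimitiveRoot ((g : K) ^ m) n := hζ.pow hpos (hm.trans (mul_comm n m))
  have hroots : {x : K | x ^ n = 1} = Polynomial.nthRootsFinset n (1 : K) := by
    ext x
    simp [Polynomial.mem_nthRootsFinset hn0]
  rw [hroots, Set.ncard_coe_finset, hζn.card_nthRootsFinset]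

theorem ncard_twoPowerTorsion {a c : ℕ} (hc : Odd c) (hK : Fintype.card K = 2 ^ a * c + 1) :
    (twoPowerTorsion K).ncard = 2 ^ a := by
  rw [twoPowerTorsion_eq hc hK, ncard_pow_eq_one_of_dvd (by simp [hK])]

end FiniteField

theorem stmt_9_general (s p k l q r : ℕ) (hs : s.Prime) (hp : p.Prime) (hsp : s ≠ p)
    (hq : Odd q) (hr : Odd r)
    (hseq : s = 2 ^ k * q + 1) (hpeq : p = 2 ^ l * r + 1) :
    (Ksp s p).ncard = 2 ^ (k + l) := by
  have := Fact.mk hs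
  have := Fact.mk hp
  have hcop : s.Coprime p := (Nat.coprime_primes hs hp).mpr hsp
  calc (Ksp s p).ncard = (twoPowerTorsion (ZMod s × ZMod p)).ncard :=
        (ZMod.chineseRemainder hcop).toMulEquiv.ncard_twoPowerTorsion
    _ = 2 ^ k * 2 ^ l := by
        rw [twoPowerTorsion_prod, Set.ncard_prod,
          FiniteField.ncard_twoPowerTorsion hq (by rw [ZMod.card, hseq]),
          FiniteField.ncard_twoPowerTorsion hr (by rw [ZMod.card, hpeq])]
    _ = 2 ^ (k + l) := (pow_add 2 k l).symm

theorem stmt_9 (s p k l q r : ℕ) (hs : s.Prime) (hp : p.Prime) (hsp : s ≠ p)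
    (hk : 1 ≤ k) (hl : 1 ≤ l) (hq : Odd q) (hr : Odd r)
    (hseq : s = 2 ^ k * q + 1) (hpeq : p = 2 ^ l * r + 1) :
    (Ksp s p).ncard = 2 ^ (k + l) :=
  stmt_9_general s p k l q r hs hp hsp hq hr hseq hpeq
end

section
/- Suppose w ∈ ZMod (s*p) is a cyclic element of the squaring map, i.e. w^(2^n) = w for some natural number n ≥ 1, and let (x, y) be the unique pair of natural numbers with x < p, y < s and w = x·s + y·p in ZMod (s*p). Then (x·s)^(2^n) = x·s and (y·p)^(2^n) = y·p in ZMod (s*p); that is, both components of the decomposition are themselves cyclic elements of the squaring map. -/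
/-!
From `u * s + v * p = 1` and `s * p = 0` one gets the idempotent `e = u * s`, which cuts
`w = x * s + y * p` down to `e * w = x * s`. Multiplication by an idempotent commutes with
taking positive powers, so `x * s` inherits `w ^ k = w`; symmetrically `(1 - e) * w = y * p`.
-/

theorem IsIdempotentElem.mul_pow_eq_self {M : Type*} [CommMonoid M] {e w : M}
    (he : IsIdempotentElem e) {k : ℕ} (hk : k ≠ 0) (hw : w ^ k = w) : (e * w) ^ k = e * w := by
  rw [mul_pow, he.pow_eq hk, hw]

section CommRing

variable {R : Type*} [CommRing R] {s p : R}

theorem IsCoprime.pow_mul_eq_self_of_pow_eq_self (hsp : IsCoprime s p) (h0 : s * p = 0)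
    {x y : R} {k : ℕ} (hk : k ≠ 0) (hw : (x * s + y * p) ^ k = x * s + y * p) :
    (x * s) ^ k = x * s := by
  obtain ⟨u, v, huv⟩ := hsp
  have he : IsIdempotentElem (u * s) := by
    unfold IsIdempotentElem
    linear_combination (u * s) * huv - u * v * h0
  have hew : u * s * (x * s + y * p) = x * s := by
    linear_combination (x * s) * huv + (u * y - x * v) * h0
  rw [← hew]
  exact he.mul_pow_eq_self hk hw

end CommRing

theorem stmt_11_general (s p : ℕ) (hs : s.Prime) (hp : p.Prime) (hsp : s ≠ p)
    (w : ZMod (s*p)) (n : ℕ) (hw : w ^ (2 ^ n) = w)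
    (x y : ℕ)
    (hdec : w = (x : ZMod (s*p)) * (s : ZMod (s*p)) + (y : ZMod (s*p)) * (p : ZMod (s*p))) :
    ((x : ZMod (s*p)) * (s : ZMod (s*p))) ^ (2 ^ n) = (x : ZMod (s*p)) * (s : ZMod (s*p)) ∧
    ((y : ZMod (s*p)) * (p : ZMod (s*p))) ^ (2 ^ n) = (y : ZMod (s*p)) * (p : ZMod (s*p)) := by
  have hcop : IsCoprime (s : ZMod (s*p)) p := by
    simpa using (Nat.Coprime.isCoprime ((Nat.coprime_primes hs hp).mpr hsp)).map
      (Int.castRingHom (ZMod (s*p)))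
  have h0 : (s : ZMod (s*p)) * p = 0 := by
    rw [← Nat.cast_mul, ZMod.natCast_self]
  have hk : 2 ^ n ≠ 0 := pow_ne_zero n two_ne_zero
  subst hdec
  refine ⟨hcop.pow_mul_eq_self_of_pow_eq_self h0 hk hw, ?_⟩
  rw [add_comm] at hw
  exact hcop.symm.pow_mul_eq_self_of_pow_eq_self ((mul_comm _ _).trans h0) hk hw

theorem stmt_11 (s p : ℕ) (hs : s.Prime) (hp : p.Prime) (hsp : s ≠ p)
    (hso : Odd s) (hpo : Odd p)
    (w : ZMod (s*p)) (n : ℕ) (hn : 1 ≤ n) (hw : w ^ (2 ^ n) = w)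
    (x y : ℕ) (hx : x < p) (hy : y < s)
    (hdec : w = (x : ZMod (s*p)) * (s : ZMod (s*p)) + (y : ZMod (s*p)) * (p : ZMod (s*p))) :
    ((x : ZMod (s*p)) * (s : ZMod (s*p))) ^ (2 ^ n) = (x : ZMod (s*p)) * (s : ZMod (s*p)) ∧
    ((y : ZMod (s*p)) * (p : ZMod (s*p))) ^ (2 ^ n) = (y : ZMod (s*p)) * (p : ZMod (s*p)) :=
  stmt_11_general s p hs hp hsp w n hw x y hdec
end

section
/- Suppose w ∈ ZMod (s*p) satisfies w^(2^n) = w for some natural number n ≥ 1. Then the least natural number μ ≥ 1 with (w mod s)^(2^μ) = w mod s and the least natural number ν ≥ 1 with (w mod p)^(2^ν) = w mod p both exist, and the least natural number n₀ ≥ 1 with w^(2^{n₀}) = w in ZMod (s*p) equals lcm(μ, ν). (The length of the cycle of w under squaring in ZMod (s*p) is the least common multiple of the lengths of its two inner cycles modulo s and modulo p.) -/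
/-- Reduction `ZMod (s*p) → ZMod s`. -/
def modS (s p : ℕ) : ZMod (s*p) →+* ZMod s := ZMod.castHom (dvd_mul_right s p) (ZMod s)
/-- Reduction `ZMod (s*p) → ZMod p`. -/
def modP (s p : ℕ) : ZMod (s*p) →+* ZMod p := ZMod.castHom (dvd_mul_left p s) (ZMod p)

/-!
The condition `u ^ 2 ^ m = u` says that `u` is a periodic point of period `m` of the squaring
map, so the least such `m ≥ 1` is the minimal period of `u` under squaring. By the Chinese
remainder theorem, `w ↦ (w mod s, w mod p)` is a ring isomorphism
`ZMod (s * p) ≃ ZMod s × ZMod p`; it conjugates squaring to squaring in each coordinate, and the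
minimal period of a point under a product map is the lcm of the minimal periods of its
coordinates.
-/

open Function

theorem Function.Semiconj.minimalPeriod_eq {α β : Type*} {h : α → β} {f : α → α}
    {g : β → β} (hinj : Injective h) (hc : Semiconj h f g) (x : α) :
    minimalPeriod g (h x) = minimalPeriod f x :=
  minimalPeriod_eq_minimalPeriod_iff.mpr fun n => by
    simp only [IsPeriodicPt, IsFixedPt, ← (hc.iterate_right n) x, hinj.eq_iff]

theorem isPeriodicPt_sq_iff {M : Type*} [Monoid M] {u : M} {m : ℕ} :
    IsPeriodicPt (· ^ 2) m u ↔ u ^ 2 ^ m = u := by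
  rw [IsPeriodicPt, IsFixedPt, pow_iterate]

theorem isLeast_minimalPeriod_sq {M : Type*} [Monoid M] {u : M} {n : ℕ} (hn : 1 ≤ n)
    (hu : u ^ 2 ^ n = u) :
    IsLeast {m : ℕ | 1 ≤ m ∧ u ^ 2 ^ m = u} (minimalPeriod (· ^ 2) u) := by
  have hper : u ∈ periodicPts (· ^ 2) := mk_mem_periodicPts hn (isPeriodicPt_sq_iff.mpr hu)
  refine ⟨⟨minimalPeriod_pos_of_mem_periodicPts hper,
    isPeriodicPt_sq_iff.mp (isPeriodicPt_minimalPeriod _ _)⟩, ?_⟩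
  rintro m ⟨hm, hum⟩
  exact (isPeriodicPt_sq_iff.mpr hum).minimalPeriod_le hm

theorem ZMod.chineseRemainder_eq_modS_modP {s p : ℕ} (h : s.Coprime p) (w : ZMod (s * p)) :
    ZMod.chineseRemainder h w = (modS s p w, modP s p w) := by
  ext <;> simp [ZMod.chineseRemainder, modS, modP]

theorem minimalPeriod_sq_eq_lcm {s p : ℕ} (h : s.Coprime p) (w : ZMod (s * p)) :
    minimalPeriod (· ^ 2) w =
      (minimalPeriod (· ^ 2) (modS s p w)).lcm (minimalPeriod (· ^ 2) (modP s p w)) := by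
  have hc : Semiconj (ZMod.chineseRemainder h) (· ^ 2) (Prod.map (· ^ 2) (· ^ 2)) :=
    fun x => map_pow _ x 2
  rw [← hc.minimalPeriod_eq (ZMod.chineseRemainder h).injective, minimalPeriod_prodMap,
    ZMod.chineseRemainder_eq_modS_modP]

theorem stmt_12_general (s p : ℕ) (hs : s.Prime) (hp : p.Prime) (hsp : s ≠ p)
    (w : ZMod (s*p)) (n : ℕ) (hn : 1 ≤ n) (hw : w ^ (2 ^ n) = w) :
    ∃ μ ν : ℕ,
      IsLeast {m : ℕ | 1 ≤ m ∧ (modS s p w) ^ (2 ^ m) = modS s p w} μ ∧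
      IsLeast {m : ℕ | 1 ≤ m ∧ (modP s p w) ^ (2 ^ m) = modP s p w} ν ∧
      IsLeast {m : ℕ | 1 ≤ m ∧ w ^ (2 ^ m) = w} (Nat.lcm μ ν) := by
  have hcop : s.Coprime p := (Nat.coprime_primes hs hp).mpr hsp
  refine ⟨_, _, isLeast_minimalPeriod_sq hn (by rw [← map_pow, hw]),
    isLeast_minimalPeriod_sq hn (by rw [← map_pow, hw]), ?_⟩
  rw [← minimalPeriod_sq_eq_lcm hcop]
  exact isLeast_minimalPeriod_sq hn hw

theorem stmt_12 (s p : ℕ) (hs : s.Prime) (hp : p.Prime) (hsp : s ≠ p)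
    (hso : Odd s) (hpo : Odd p)
    (w : ZMod (s*p)) (n : ℕ) (hn : 1 ≤ n) (hw : w ^ (2 ^ n) = w) :
    ∃ μ ν : ℕ,
      IsLeast {m : ℕ | 1 ≤ m ∧ (modS s p w) ^ (2 ^ m) = modS s p w} μ ∧
      IsLeast {m : ℕ | 1 ≤ m ∧ (modP s p w) ^ (2 ^ m) = modP s p w} ν ∧
      IsLeast {m : ℕ | 1 ≤ m ∧ w ^ (2 ^ m) = w} (Nat.lcm μ ν) :=
  stmt_12_general s p hs hp hsp w n hn hw
end

section
/- Let a ∈ ZMod s and b ∈ ZMod p be cyclic elements of the squaring map, with μ ≥ 1 the least natural number such that a^(2^μ) = a and ν ≥ 1 the least natural number such that b^(2^ν) = b. Let C = {w ∈ ZMod (s*p) : w mod s = a^(2^i) for some natural i, and w mod p = b^(2^j) for some natural j}. Then: (i) C has exactly μ·ν elements; (ii) for every w ∈ C, the squaring orbit {w^(2^i) : i ∈ ℕ} is contained in C and has exactly lcm(μ, ν) elements. Consequently C decomposes into exactly gcd(μ, ν) squaring orbits, each of length lcm(μ, ν). -/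
open Function Set

namespace Function

variable {α : Type*} {f : α → α} {x y : α} {μ L : ℕ} {S : Set α}

theorem isLeast_isPeriodicPt_iff :
    IsLeast {n | 1 ≤ n ∧ IsPeriodicPt f n x} μ ↔ x ∈ periodicPts f ∧ minimalPeriod f x = μ := by
  refine ⟨fun h => ⟨⟨μ, h.1⟩, ?_⟩, fun ⟨hx, hμ⟩ => hμ ▸ ⟨?_, fun n hn => ?_⟩⟩
  · exact (h.1.2.minimalPeriod_le h.1.1).antisymm
      (h.2 ⟨h.1.2.minimalPeriod_pos h.1.1, isPeriodicPt_minimalPeriod f x⟩)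
  · exact ⟨minimalPeriod_pos_of_mem_periodicPts hx, isPeriodicPt_minimalPeriod f x⟩
  · exact hn.2.minimalPeriod_le hn.1

theorem ncard_range_iterate (hx : x ∈ periodicPts f) :
    (range (f^[·] x)).ncard = minimalPeriod f x := by
  have hrange : range (f^[·] x) = (f^[·] x) '' Iio (minimalPeriod f x) := by
    refine (range_subset_iff.2 fun n => ?_).antisymm (image_subset_range _ _)
    rw [← iterate_mod_minimalPeriod_eq]
    exact mem_image_of_mem _ (Nat.mod_lt _ (minimalPeriod_pos_of_mem_periodicPts hx))
  rw [hrange, iterate_injOn_Iio_minimalPeriod.ncard_image, ncard_Iio_nat]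

theorem range_iterate_eq_of_mem (hx : x ∈ periodicPts f) (hy : y ∈ range (f^[·] x)) :
    range (f^[·] y) = range (f^[·] x) := by
  obtain ⟨k, rfl⟩ := hy
  obtain ⟨P, hP⟩ : ∃ P, minimalPeriod f x = P + 1 :=
    Nat.exists_eq_add_one.2 (minimalPeriod_pos_of_mem_periodicPts hx)
  refine subset_antisymm (range_subset_iff.2 fun n => ⟨n + k, iterate_add_apply f n k x⟩)
    (range_subset_iff.2 fun n => ⟨n + k * P, ?_⟩)
  have hn : n + k * P + k = n + minimalPeriod f x * k := by rw [hP]; ring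
  change f^[n + k * P] (f^[k] x) = f^[n] x
  rw [← iterate_add_apply, hn, iterate_add_apply,
    ((isPeriodicPt_minimalPeriod f x).mul_const k).eq]

theorem range_iterate_subset (hS : MapsTo f S S) (hx : x ∈ S) : range (f^[·] x) ⊆ S :=
  range_subset_iff.2 fun n => hS.iterate n hx

theorem ncard_orbits_mul (hSfin : S.Finite) (hS : MapsTo f S S) (hL : 0 < L)
    (hper : ∀ x ∈ S, minimalPeriod f x = L) :
    {O | ∃ x ∈ S, O = range (f^[·] x)}.ncard * L = S.ncard := by
  classical
  set orbit := fun x => range (f^[·] x)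
  have horbits : {O | ∃ x ∈ S, O = orbit x} = orbit '' S := by
    ext O
    simp only [mem_ofPred_eq, mem_image, eq_comm]
  rw [horbits, ← hSfin.coe_toFinset, ← Finset.coe_image, ncard_coe_finset, ncard_coe_finset,
    Finset.card_eq_sum_card_image orbit, Finset.sum_const_nat fun O hO => ?_]
  obtain ⟨w, hw, rfl⟩ := Finset.mem_image.1 hO
  rw [hSfin.mem_toFinset] at hw
  have hwper : w ∈ periodicPts f := minimalPeriod_pos_iff_mem_periodicPts.1 (hper w hw ▸ hL)
  have hfiber : ↑(hSfin.toFinset.filter (orbit · = orbit w)) = orbit w := by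
    ext y
    simp only [Finset.coe_filter, hSfin.mem_toFinset, mem_ofPred_eq]
    constructor
    · rintro ⟨-, hy⟩
      exact hy ▸ ⟨0, rfl⟩
    · intro hy
      exact ⟨range_iterate_subset hS hw hy, range_iterate_eq_of_mem hwper hy⟩
  rw [← ncard_coe_finset, hfiber, ncard_range_iterate hwper, hper w hw]

end Function

section Squaring

variable {M N : Type*} [Monoid M] [Monoid N]

theorem setOf_eq_pow_two_pow_eq_range (a : M) :
    {u | ∃ i : ℕ, u = a ^ 2 ^ i} = range ((· ^ 2)^[·] a) := by
  ext u
  simp [pow_iterate, eq_comm]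

theorem isLeast_pow_two_pow_iff {a : M} {μ : ℕ} :
    IsLeast {n | 1 ≤ n ∧ a ^ 2 ^ n = a} μ ↔
      a ∈ periodicPts (· ^ 2) ∧ minimalPeriod (· ^ 2) a = μ := by
  rw [← isLeast_isPeriodicPt_iff]
  simp only [IsPeriodicPt, IsFixedPt]
  simp only [pow_iterate]

theorem minimalPeriod_pow_map {F : Type*} [FunLike F M N] [MonoidHomClass F M N] (φ : F)
    (hφ : Injective φ) (k : ℕ) (x : M) :
    minimalPeriod (· ^ k) (φ x) = minimalPeriod (· ^ k) x := by
  refine minimalPeriod_eq_minimalPeriod_iff.2 fun n => ?_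
  simp only [IsPeriodicPt, IsFixedPt, pow_iterate, ← map_pow, hφ.eq_iff]

theorem minimalPeriod_pow_prod (k : ℕ) (x : M × N) :
    minimalPeriod (· ^ k) x = (minimalPeriod (· ^ k) x.1).lcm (minimalPeriod (· ^ k) x.2) :=
  minimalPeriod_prodMap _ _ x

end Squaring

section ChineseRemainder

variable {s p : ℕ}

theorem chineseRemainder_apply (h : s.Coprime p) (w : ZMod (s * p)) :
    ZMod.chineseRemainder h w = (modS s p w, modP s p w) :=
  RingHom.congr_fun (RingHom.ext_zmod (ZMod.chineseRemainder h).toRingHom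
    ((modS s p).prod (modP s p))) w

theorem ncard_setOf_modS_mem_and_modP_mem (h : s.Coprime p) (A : Set (ZMod s))
    (B : Set (ZMod p)) : {w | modS s p w ∈ A ∧ modP s p w ∈ B}.ncard = A.ncard * B.ncard := by
  have hpre : {w | modS s p w ∈ A ∧ modP s p w ∈ B} = ZMod.chineseRemainder h ⁻¹' A ×ˢ B := by
    ext w
    simp [chineseRemainder_apply]
  rw [hpre, ncard_preimage_of_injective_subset_range (ZMod.chineseRemainder h).injective
    (by simp), ncard_prod]

theorem minimalPeriod_pow_eq_lcm (h : s.Coprime p) (k : ℕ) (w : ZMod (s * p)) :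
    minimalPeriod (· ^ k) w =
      (minimalPeriod (· ^ k) (modS s p w)).lcm (minimalPeriod (· ^ k) (modP s p w)) := by
  rw [← minimalPeriod_pow_map _ (ZMod.chineseRemainder h).injective, minimalPeriod_pow_prod,
    chineseRemainder_apply]

end ChineseRemainder

theorem stmt_13_general (s p : ℕ) (hs : s.Prime) (hp : p.Prime) (hsp : s ≠ p)
    (a : ZMod s) (b : ZMod p) (μ ν : ℕ)
    (hμ : IsLeast {n : ℕ | 1 ≤ n ∧ a ^ (2 ^ n) = a} μ)
    (hν : IsLeast {n : ℕ | 1 ≤ n ∧ b ^ (2 ^ n) = b} ν) :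
    let C : Set (ZMod (s*p)) :=
      {w | (∃ i : ℕ, modS s p w = a ^ (2 ^ i)) ∧ (∃ j : ℕ, modP s p w = b ^ (2 ^ j))}
    C.ncard = μ * ν ∧
    (∀ w ∈ C, {u : ZMod (s*p) | ∃ i : ℕ, u = w ^ (2 ^ i)} ⊆ C ∧
      {u : ZMod (s*p) | ∃ i : ℕ, u = w ^ (2 ^ i)}.ncard = Nat.lcm μ ν) ∧
    {O : Set (ZMod (s*p)) | ∃ w ∈ C, O = {u | ∃ i : ℕ, u = w ^ (2 ^ i)}}.ncard
      = Nat.gcd μ ν := by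
  intro C
  have hcop : s.Coprime p := (Nat.coprime_primes hs hp).2 hsp
  have : NeZero (s * p) := ⟨Nat.mul_ne_zero hs.ne_zero hp.ne_zero⟩
  obtain ⟨ha, hμ⟩ := isLeast_pow_two_pow_iff.1 hμ
  obtain ⟨hb, hν⟩ := isLeast_pow_two_pow_iff.1 hν
  have hL : 0 < μ.lcm ν := Nat.lcm_pos (hμ ▸ minimalPeriod_pos_of_mem_periodicPts ha)
    (hν ▸ minimalPeriod_pos_of_mem_periodicPts hb)
  have hC : C = {w | modS s p w ∈ range ((· ^ 2)^[·] a) ∧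
      modP s p w ∈ range ((· ^ 2)^[·] b)} := by
    simp only [C, ← setOf_eq_pow_two_pow_eq_range]
    rfl
  have hmaps : MapsTo (· ^ 2) C C := by
    rw [hC]
    rintro w ⟨⟨i, hi⟩, ⟨j, hj⟩⟩
    exact ⟨⟨i + 1, by simp [iterate_succ_apply', hi]⟩,
      ⟨j + 1, by simp [iterate_succ_apply', hj]⟩⟩
  have hper : ∀ w ∈ C, minimalPeriod (· ^ 2) w = μ.lcm ν := by
    rw [hC]
    rintro w ⟨⟨i, hi⟩, ⟨j, hj⟩⟩
    rw [minimalPeriod_pow_eq_lcm hcop, ← hi, ← hj, minimalPeriod_apply_iterate ha,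
      minimalPeriod_apply_iterate hb, hμ, hν]
  have hcard : C.ncard = μ * ν := by
    rw [hC, ncard_setOf_modS_mem_and_modP_mem hcop, ncard_range_iterate ha,
      ncard_range_iterate hb, hμ, hν]
  simp only [setOf_eq_pow_two_pow_eq_range]
  refine ⟨hcard, fun w hw => ⟨range_iterate_subset hmaps hw, ?_⟩, ?_⟩
  · rw [ncard_range_iterate (minimalPeriod_pos_iff_mem_periodicPts.1 (hper w hw ▸ hL)),
      hper w hw]
  · refine Nat.eq_of_mul_eq_mul_right hL ?_
    rw [ncard_orbits_mul (toFinite C) hmaps hL hper, hcard, Nat.gcd_mul_lcm]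

theorem stmt_13 (s p : ℕ) (hs : s.Prime) (hp : p.Prime) (hsp : s ≠ p)
    (hso : Odd s) (hpo : Odd p)
    (a : ZMod s) (b : ZMod p) (μ ν : ℕ)
    (hμ : IsLeast {n : ℕ | 1 ≤ n ∧ a ^ (2 ^ n) = a} μ)
    (hν : IsLeast {n : ℕ | 1 ≤ n ∧ b ^ (2 ^ n) = b} ν) :
    let C : Set (ZMod (s*p)) :=
      {w | (∃ i : ℕ, modS s p w = a ^ (2 ^ i)) ∧ (∃ j : ℕ, modP s p w = b ^ (2 ^ j))}
    C.ncard = μ * ν ∧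
    (∀ w ∈ C, {u : ZMod (s*p) | ∃ i : ℕ, u = w ^ (2 ^ i)} ⊆ C ∧
      {u : ZMod (s*p) | ∃ i : ℕ, u = w ^ (2 ^ i)}.ncard = Nat.lcm μ ν) ∧
    {O : Set (ZMod (s*p)) | ∃ w ∈ C, O = {u | ∃ i : ℕ, u = w ^ (2 ^ i)}}.ncard
      = Nat.gcd μ ν :=
  stmt_13_general s p hs hp hsp a b μ ν hμ hν
end

section
/- Let a ∈ ZMod (s*p) be a unit that is a cyclic element of the squaring map, i.e. a^(2^m) = a for some natural number m ≥ 1. Then for every natural number n, the set {x ∈ ZMod (s*p) : x^(2^n) = a} has the same cardinality as the set {x ∈ ZMod (s*p) : x^(2^n) = 1}. (The tree rooted at any cyclic element of ZMod (s*p) is a translate of the tree of unity, obtained by multiplying levelwise by the arc through a.) -/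
/-!
A unit `a` with `a ^ 2 ^ m = a` satisfies `a ^ (2 ^ m - 1) = 1`, so its order is odd and hence
coprime to `2 ^ n`; thus `a = b ^ 2 ^ n` for some unit `b`. Multiplication by `b` is then a bijection
from the `2 ^ n`-th roots of unity onto the `2 ^ n`-th roots of `a`.
-/

theorem Units.image_mul_left_setOf_pow_eq_one {M : Type*} [CommMonoid M] (u : Mˣ) (k : ℕ) :
    ((u : M) * ·) '' {x : M | x ^ k = 1} = {x : M | x ^ k = (u : M) ^ k} := by
  ext x
  constructor
  · rintro ⟨y, hy : y ^ k = 1, rfl⟩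
    simp [mul_pow, hy]
  · intro (hx : x ^ k = (u : M) ^ k)
    refine ⟨(↑u⁻¹ : M) * x, ?_, by simp⟩
    show ((↑u⁻¹ : M) * x) ^ k = 1
    rw [mul_pow, hx, ← mul_pow, Units.inv_mul, one_pow]

theorem Units.ncard_setOf_pow_eq_pow {M : Type*} [CommMonoid M] (u : Mˣ) (k : ℕ) :
    {x : M | x ^ k = (u : M) ^ k}.ncard = {x : M | x ^ k = 1}.ncard := by
  rw [← u.image_mul_left_setOf_pow_eq_one,
    Set.ncard_image_of_injective _ u.isUnit.mul_right_injective]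

theorem odd_orderOf_of_pow_two_pow_eq_self {G : Type*} [Group G] {g : G} {m : ℕ} (hm : 1 ≤ m)
    (hg : g ^ 2 ^ m = g) : Odd (orderOf g) := by
  have hpow : g ^ (2 ^ m - 1) = 1 := by
    rw [← mul_eq_right, pow_sub_one_mul (by positivity), hg]
  have hodd : Odd (2 ^ m - 1) :=
    Nat.Even.sub_odd Nat.one_le_two_pow (Nat.even_pow.mpr ⟨even_two, by omega⟩) odd_one
  exact hodd.of_dvd_nat (orderOf_dvd_of_pow_eq_one hpow)

theorem ncard_setOf_pow_two_pow_eq_of_pow_two_pow_eq_self {M : Type*} [CommMonoid M] {a : M}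
    (ha : IsUnit a) {m : ℕ} (hm : 1 ≤ m) (hcyc : a ^ 2 ^ m = a) (n : ℕ) :
    {x : M | x ^ 2 ^ n = a}.ncard = {x : M | x ^ 2 ^ n = 1}.ncard := by
  lift a to Mˣ using ha with u
  have hu : u ^ 2 ^ m = u := Units.ext (by simpa using hcyc)
  have hco : (2 ^ n).Coprime (orderOf u) :=
    (Nat.coprime_two_left.mpr (odd_orderOf_of_pow_two_pow_eq_self hm hu)).pow_left n
  obtain ⟨r, hr⟩ := exists_pow_eq_self_of_coprime hco
  rw [← hr, ← pow_mul, mul_comm, pow_mul]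
  simpa using (u ^ r).ncard_setOf_pow_eq_pow (2 ^ n)

theorem stmt_14_general (s p : ℕ)
    (a : ZMod (s*p)) (ha : IsUnit a)
    (m : ℕ) (hm : 1 ≤ m) (hcyc : a ^ (2 ^ m) = a) :
    ∀ n : ℕ, {x : ZMod (s*p) | x ^ (2 ^ n) = a}.ncard
      = {x : ZMod (s*p) | x ^ (2 ^ n) = 1}.ncard :=
  ncard_setOf_pow_two_pow_eq_of_pow_two_pow_eq_self ha hm hcyc

theorem stmt_14 (s p : ℕ) (hs : s.Prime) (hp : p.Prime) (hsp : s ≠ p)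
    (hso : Odd s) (hpo : Odd p)
    (a : ZMod (s*p)) (ha : IsUnit a)
    (m : ℕ) (hm : 1 ≤ m) (hcyc : a ^ (2 ^ m) = a) :
    ∀ n : ℕ, {x : ZMod (s*p) | x ^ (2 ^ n) = a}.ncard
      = {x : ZMod (s*p) | x ^ (2 ^ n) = 1}.ncard :=
  stmt_14_general s p a ha m hm hcyc
end

section
/- The number of cyclic elements of 𝔻_{sp}, i.e. the cardinality of {w ∈ ZMod (s*p) : w is a unit, (w mod s)^(2^i) ≠ 1 for every natural i, (w mod p)^(2^j) ≠ 1 for every natural j, and w^(2^m) = w for some natural number m ≥ 1}, equals (q−1)·(r−1). -/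
/-!
A unit `a` satisfies `a ^ 2 ^ m = a` for some `m ≥ 1` iff `2 ^ m ≡ 1` modulo its order for some
`m ≥ 1`, i.e. iff its order is odd; and an element of odd order has no iterated square equal
to `1` unless it is `1` itself. By the Chinese remainder theorem the count for `ZMod (s*p)` is
the product of the counts for `ZMod s` and `ZMod p`. In the cyclic group `(ZMod s)ˣ` of order
`2 ^ k * q` the elements of odd order form the kernel of `x ↦ x ^ q`, which has `q` elements,
so `q - 1` of them are different from `1`.
-/

theorem Nat.odd_lcm_iff {a b : ℕ} : Odd (a.lcm b) ↔ Odd a ∧ Odd b :=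
  ⟨fun h ↦ ⟨h.of_dvd_nat (Nat.dvd_lcm_left a b), h.of_dvd_nat (Nat.dvd_lcm_right a b)⟩,
    fun ⟨ha, hb⟩ ↦ (ha.mul hb).of_dvd_nat (Nat.lcm_dvd_mul a b)⟩

theorem Nat.exists_two_pow_modEq_one_iff_odd {n : ℕ} :
    (∃ m, 1 ≤ m ∧ 2 ^ m ≡ 1 [MOD n]) ↔ Odd n := by
  constructor
  · rintro ⟨m, hm, hmod⟩
    have hdvd : n ∣ 2 ^ m - 1 := (Nat.modEq_iff_dvd' Nat.one_le_two_pow).mp hmod.symm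
    exact (Nat.Even.sub_odd Nat.one_le_two_pow (Nat.even_pow.mpr ⟨even_two, by omega⟩)
      odd_one).of_dvd_nat hdvd
  · intro hn
    exact ⟨n.totient, Nat.totient_pos.mpr hn.pos, Nat.ModEq.pow_totient hn.coprime_two_left⟩

theorem exists_pow_two_pow_eq_self_iff_odd_orderOf {G : Type*} [Group G] {g : G} :
    (∃ m, 1 ≤ m ∧ g ^ 2 ^ m = g) ↔ Odd (orderOf g) := by
  have hmod (m : ℕ) : g ^ 2 ^ m = g ↔ 2 ^ m ≡ 1 [MOD orderOf g] := by
    rw [← pow_eq_pow_iff_modEq, pow_one]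
  simp only [hmod]
  exact Nat.exists_two_pow_modEq_one_iff_odd

theorem isUnit_and_exists_pow_two_pow_eq_self_iff_odd_orderOf {M : Type*} [Monoid M] {a : M} :
    (IsUnit a ∧ ∃ m, 1 ≤ m ∧ a ^ 2 ^ m = a) ↔ Odd (orderOf a) := by
  constructor
  · rintro ⟨⟨u, rfl⟩, h⟩
    simp only [← Units.val_pow_eq_pow_val, Units.val_inj] at h
    rw [orderOf_units]
    exact exists_pow_two_pow_eq_self_iff_odd_orderOf.1 h
  · intro h
    obtain ⟨u, rfl⟩ := (orderOf_pos_iff.1 h.pos).isUnit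
    rw [orderOf_units] at h
    simpa only [← Units.val_pow_eq_pow_val, Units.val_inj, Units.isUnit, true_and]
      using exists_pow_two_pow_eq_self_iff_odd_orderOf.2 h

theorem forall_pow_two_pow_ne_one_iff {M : Type*} [Monoid M] {a : M} (ha : Odd (orderOf a)) :
    (∀ i : ℕ, a ^ 2 ^ i ≠ 1) ↔ a ≠ 1 := by
  refine ⟨fun h ↦ by simpa using h 0, fun h i hi ↦ h ?_⟩
  rw [← orderOf_eq_one_iff]
  exact Nat.Coprime.eq_one_of_dvd (Nat.Coprime.pow_right i ha.coprime_two_right)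
    (orderOf_dvd_of_pow_eq_one hi)

theorem IsCyclic.ncard_setOf_odd_orderOf {G : Type*} [CommGroup G] [IsCyclic G] [Finite G]
    {k q : ℕ} (hG : Nat.card G = 2 ^ k * q) (hq : Odd q) :
    {g : G | Odd (orderOf g)}.ncard = q := by
  have hker : {g : G | Odd (orderOf g)} = (powMonoidHom q : G →* G).ker := by
    ext g
    simp only [Set.mem_ofPred_eq, SetLike.mem_coe, MonoidHom.mem_ker, powMonoidHom_apply,
      ← orderOf_dvd_iff_pow_eq_one]
    refine ⟨fun hg ↦ ?_, fun hg ↦ hq.of_dvd_nat hg⟩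
    have hcop : (orderOf g).Coprime (2 ^ k) := Nat.Coprime.pow_right k hg.coprime_two_right
    exact hcop.dvd_of_dvd_mul_left (hG ▸ orderOf_dvd_natCard g)
  rw [hker, ← Nat.card_coe_set_eq, SetLike.coe_sort_coe, IsCyclic.card_powMonoidHom_ker, hG,
    Nat.gcd_eq_right (dvd_mul_left q _)]

theorem setOf_odd_orderOf_eq_image_units (M : Type*) [Monoid M] :
    {a : M | Odd (orderOf a)} = Units.val '' {u : Mˣ | Odd (orderOf u)} := by
  ext a
  refine ⟨fun ha ↦ ?_, ?_⟩
  · obtain ⟨u, rfl⟩ := (orderOf_pos_iff.1 ha.pos).isUnit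
    exact ⟨u, by rwa [Set.mem_ofPred_eq, ← orderOf_units], rfl⟩
  · rintro ⟨u, hu, rfl⟩
    rwa [Set.mem_ofPred_eq, orderOf_units]

theorem FiniteField.ncard_setOf_odd_orderOf {F : Type*} [Field F] [Finite F] {k q : ℕ}
    (hF : Nat.card F = 2 ^ k * q + 1) (hq : Odd q) :
    {a : F | Odd (orderOf a)}.ncard = q := by
  rw [setOf_odd_orderOf_eq_image_units, Set.ncard_image_of_injective _ Units.val_injective]
  exact IsCyclic.ncard_setOf_odd_orderOf (by rw [Nat.card_units, hF, Nat.add_sub_cancel]) hq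

theorem Prod.setOf_isUnit_pow_two_pow_eq {M N : Type*} [Monoid M] [Monoid N] :
    {x : M × N | IsUnit x ∧ (∀ i : ℕ, x.1 ^ 2 ^ i ≠ 1) ∧ (∀ j : ℕ, x.2 ^ 2 ^ j ≠ 1) ∧
      ∃ m, 1 ≤ m ∧ x ^ 2 ^ m = x} =
      ({a | Odd (orderOf a)} \ {1}) ×ˢ ({b | Odd (orderOf b)} \ {1}) := by
  ext x
  have hodd : (IsUnit x ∧ ∃ m, 1 ≤ m ∧ x ^ 2 ^ m = x) ↔
      Odd (orderOf x.1) ∧ Odd (orderOf x.2) := by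
    rw [isUnit_and_exists_pow_two_pow_eq_self_iff_odd_orderOf, Prod.orderOf, Nat.odd_lcm_iff]
  simp only [Set.mem_ofPred_eq, Set.mem_prod, Set.mem_sdiff, Set.mem_singleton_iff]
  constructor
  · rintro ⟨hu, h₁, h₂, hm⟩
    obtain ⟨o₁, o₂⟩ := hodd.1 ⟨hu, hm⟩
    exact ⟨⟨o₁, (forall_pow_two_pow_ne_one_iff o₁).1 h₁⟩,
      o₂, (forall_pow_two_pow_ne_one_iff o₂).1 h₂⟩
  · rintro ⟨⟨o₁, n₁⟩, o₂, n₂⟩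
    obtain ⟨hu, hm⟩ := hodd.2 ⟨o₁, o₂⟩
    exact ⟨hu, (forall_pow_two_pow_ne_one_iff o₁).2 n₁,
      (forall_pow_two_pow_ne_one_iff o₂).2 n₂, hm⟩

theorem stmt_18_general (s p k l q r : ℕ) (hs : s.Prime) (hp : p.Prime) (hsp : s ≠ p)
    (hq : Odd q) (hr : Odd r)
    (hseq : s = 2 ^ k * q + 1) (hpeq : p = 2 ^ l * r + 1) :
    {w : ZMod (s*p) | IsUnit w ∧ (∀ i : ℕ, (modS s p w) ^ (2 ^ i) ≠ 1) ∧
      (∀ j : ℕ, (modP s p w) ^ (2 ^ j) ≠ 1) ∧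
      (∃ m : ℕ, 1 ≤ m ∧ w ^ (2 ^ m) = w)}.ncard = (q - 1) * (r - 1) := by
  have := Fact.mk hs
  have := Fact.mk hp
  let χ := ZMod.chineseRemainder ((Nat.coprime_primes hs hp).mpr hsp)
  have hχ : (modS s p).prod (modP s p) = χ := RingHom.ext_zmod _ _
  have hS (w : ZMod (s * p)) : modS s p w = (χ w).1 :=
    congrArg Prod.fst (RingHom.congr_fun hχ w)
  have hP (w : ZMod (s * p)) : modP s p w = (χ w).2 :=
    congrArg Prod.snd (RingHom.congr_fun hχ w)
  have hset : {w : ZMod (s*p) | IsUnit w ∧ (∀ i : ℕ, (modS s p w) ^ (2 ^ i) ≠ 1) ∧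
      (∀ j : ℕ, (modP s p w) ^ (2 ^ j) ≠ 1) ∧ (∃ m : ℕ, 1 ≤ m ∧ w ^ (2 ^ m) = w)} =
      χ ⁻¹' {x | IsUnit x ∧ (∀ i : ℕ, x.1 ^ 2 ^ i ≠ 1) ∧ (∀ j : ℕ, x.2 ^ 2 ^ j ≠ 1) ∧
        ∃ m, 1 ≤ m ∧ x ^ 2 ^ m = x} := by
    ext w
    simp only [Set.mem_preimage, Set.mem_ofPred_eq, isUnit_map_iff, ← map_pow,
      EmbeddingLike.apply_eq_iff_eq, hS, hP]
  rw [hset, Set.ncard_preimage_of_injective_subset_range χ.injective (by simp),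
    Prod.setOf_isUnit_pow_two_pow_eq, Set.ncard_prod,
    Set.ncard_sdiff_singleton_of_mem (by simp), Set.ncard_sdiff_singleton_of_mem (by simp),
    FiniteField.ncard_setOf_odd_orderOf (by rw [Nat.card_zmod, hseq]) hq,
    FiniteField.ncard_setOf_odd_orderOf (by rw [Nat.card_zmod, hpeq]) hr]

theorem stmt_18 (s p k l q r : ℕ) (hs : s.Prime) (hp : p.Prime) (hsp : s ≠ p)
    (hk : 1 ≤ k) (hl : 1 ≤ l) (hq : Odd q) (hr : Odd r)
    (hseq : s = 2 ^ k * q + 1) (hpeq : p = 2 ^ l * r + 1) :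
    {w : ZMod (s*p) | IsUnit w ∧ (∀ i : ℕ, (modS s p w) ^ (2 ^ i) ≠ 1) ∧
      (∀ j : ℕ, (modP s p w) ^ (2 ^ j) ≠ 1) ∧
      (∃ m : ℕ, 1 ≤ m ∧ w ^ (2 ^ m) = w)}.ncard = (q - 1) * (r - 1) :=
  stmt_18_general s p k l q r hs hp hsp hq hr hseq hpeq
end

section
/- The set of off-by-one elements, namely {w ∈ ZMod (s*p) : w is a unit and ((w mod s)^(2^i) = 1 for some natural i, or (w mod p)^(2^j) = 1 for some natural j)}, has exactly 2^(k+l)·(q + r − 1) elements. -/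
open Set

def twoPowerRoots (M : Type*) [Monoid M] : Set M := {a | ∃ i : ℕ, a ^ 2 ^ i = 1}

section Monoid

variable {M : Type*} [Monoid M]

lemma twoPowerRoots_subset_setOf_isUnit : twoPowerRoots M ⊆ {a | IsUnit a} :=
  fun _ ⟨i, hi⟩ ↦ IsUnit.of_pow_eq_one hi (pow_ne_zero i two_ne_zero)

lemma twoPowerRoots_eq_image_units : twoPowerRoots M = Units.val '' twoPowerRoots Mˣ := by
  ext a
  constructor
  · intro ha
    obtain ⟨u, rfl⟩ : IsUnit a := twoPowerRoots_subset_setOf_isUnit ha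
    obtain ⟨i, hi⟩ := ha
    exact ⟨u, ⟨i, Units.ext (by simpa using hi)⟩, rfl⟩
  · rintro ⟨u, ⟨i, hi⟩, rfl⟩
    exact ⟨i, by rw [← Units.val_pow_eq_pow_val, hi, Units.val_one]⟩

end Monoid

lemma pow_two_pow_eq_one_of_natCard_eq {G : Type*} [Group G] {k q i : ℕ}
    (hG : Nat.card G = 2 ^ k * q) (hq : Odd q) {g : G} (hg : g ^ 2 ^ i = 1) :
    g ^ 2 ^ k = 1 := by
  obtain ⟨m, -, hm⟩ := (Nat.dvd_prime_pow Nat.prime_two).mp (orderOf_dvd_of_pow_eq_one hg)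
  have hcard : 2 ^ m ∣ 2 ^ k * q := hm ▸ hG ▸ orderOf_dvd_natCard g
  have hcop : Nat.Coprime (2 ^ m) q := (Nat.coprime_two_left.mpr hq).pow_left m
  exact orderOf_dvd_iff_pow_eq_one.mp (hm ▸ hcop.dvd_of_dvd_mul_right hcard)

lemma IsCyclic.ncard_twoPowerRoots {G : Type*} [CommGroup G] [IsCyclic G] [Finite G]
    {k q : ℕ} (hG : Nat.card G = 2 ^ k * q) (hq : Odd q) :
    (twoPowerRoots G).ncard = 2 ^ k := by
  have hker : twoPowerRoots G = (powMonoidHom (2 ^ k) : G →* G).ker := by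
    ext g
    exact ⟨fun ⟨_, hg⟩ ↦ pow_two_pow_eq_one_of_natCard_eq hG hq hg, fun hg ↦ ⟨k, hg⟩⟩
  rw [hker, ← Nat.card_coe_set_eq, SetLike.coe_sort_coe, IsCyclic.card_powMonoidHom_ker, hG,
    Nat.gcd_mul_right_left]

section Field

variable {F : Type*} [Field F] [Finite F]

lemma ncard_twoPowerRoots_of_natCard_eq {k q : ℕ} (hF : Nat.card F = 2 ^ k * q + 1)
    (hq : Odd q) : (twoPowerRoots F).ncard = 2 ^ k := by
  have hunits : Nat.card Fˣ = 2 ^ k * q := by rw [Nat.card_units, hF, Nat.add_sub_cancel]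
  rw [twoPowerRoots_eq_image_units, ncard_image_of_injective _ Units.val_injective,
    IsCyclic.ncard_twoPowerRoots hunits hq]

lemma ncard_setOf_isUnit : {a : F | IsUnit a}.ncard = Nat.card F - 1 := by
  simp only [isUnit_iff_ne_zero]
  rw [← compl_singleton_eq, ncard_compl, ncard_singleton]

end Field

lemma ncard_prod_union_prod_add {α β : Type*} [Finite α] [Finite β] {A U : Set α}
    {B V : Set β} (hA : A ⊆ U) (hB : B ⊆ V) :
    (A ×ˢ V ∪ U ×ˢ B).ncard + A.ncard * B.ncard = A.ncard * V.ncard + U.ncard * B.ncard := by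
  have h := ncard_union_add_ncard_inter (A ×ˢ V) (U ×ˢ B)
  rwa [prod_inter_prod, inter_eq_left.mpr hA, inter_eq_right.mpr hB, ncard_prod, ncard_prod,
    ncard_prod] at h

lemma modS_eq_fst_chineseRemainder {s p : ℕ} (h : s.Coprime p) (w : ZMod (s * p)) :
    modS s p w = (ZMod.chineseRemainder h w).1 := by
  rw [Subsingleton.elim (modS s p)
    ((RingHom.fst _ _).comp (ZMod.chineseRemainder h : ZMod (s * p) →+* ZMod s × ZMod p))]
  rfl

lemma modP_eq_snd_chineseRemainder {s p : ℕ} (h : s.Coprime p) (w : ZMod (s * p)) :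
    modP s p w = (ZMod.chineseRemainder h w).2 := by
  rw [Subsingleton.elim (modP s p)
    ((RingHom.snd _ _).comp (ZMod.chineseRemainder h : ZMod (s * p) →+* ZMod s × ZMod p))]
  rfl

lemma setOf_isUnit_and_twoPowerRoots_eq_preimage {s p : ℕ} (h : s.Coprime p) :
    {w : ZMod (s * p) | IsUnit w ∧
      (modS s p w ∈ twoPowerRoots (ZMod s) ∨ modP s p w ∈ twoPowerRoots (ZMod p))} =
      ZMod.chineseRemainder h ⁻¹'
        (twoPowerRoots (ZMod s) ×ˢ {b | IsUnit b} ∪ {a | IsUnit a} ×ˢ twoPowerRoots (ZMod p)) := by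
  ext w
  set e := ZMod.chineseRemainder h
  have hunit : IsUnit w ↔ IsUnit (e w).1 ∧ IsUnit (e w).2 := by
    rw [← Prod.isUnit_iff, isUnit_map_iff]
  have hs : (e w).1 ∈ twoPowerRoots _ → IsUnit (e w).1 := (twoPowerRoots_subset_setOf_isUnit ·)
  have hp : (e w).2 ∈ twoPowerRoots _ → IsUnit (e w).2 := (twoPowerRoots_subset_setOf_isUnit ·)
  simp only [mem_ofPred_eq, mem_preimage, mem_union, mem_prod, hunit,
    modS_eq_fst_chineseRemainder h, modP_eq_snd_chineseRemainder h]
  tauto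

theorem stmt_19_general (s p k l q r : ℕ) (hs : s.Prime) (hp : p.Prime) (hsp : s ≠ p)
    (hq : Odd q) (hr : Odd r)
    (hseq : s = 2 ^ k * q + 1) (hpeq : p = 2 ^ l * r + 1) :
    {w : ZMod (s*p) | IsUnit w ∧
      ((∃ i : ℕ, (modS s p w) ^ (2 ^ i) = 1) ∨
       (∃ j : ℕ, (modP s p w) ^ (2 ^ j) = 1))}.ncard
      = 2 ^ (k + l) * (q + r - 1) := by
  have := Fact.mk hs
  have := Fact.mk hp
  have hcop : s.Coprime p := (Nat.coprime_primes hs hp).mpr hsp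
  have hcount := ncard_prod_union_prod_add (twoPowerRoots_subset_setOf_isUnit (M := ZMod s))
    (twoPowerRoots_subset_setOf_isUnit (M := ZMod p))
  rw [ncard_twoPowerRoots_of_natCard_eq (by rw [Nat.card_zmod, hseq]) hq,
    ncard_twoPowerRoots_of_natCard_eq (by rw [Nat.card_zmod, hpeq]) hr,
    ncard_setOf_isUnit, ncard_setOf_isUnit, Nat.card_zmod, Nat.card_zmod,
    show s - 1 = 2 ^ k * q by omega, show p - 1 = 2 ^ l * r by omega] at hcount
  calc _ = _ := congrArg ncard (setOf_isUnit_and_twoPowerRoots_eq_preimage hcop)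
    _ = _ := ncard_preimage_of_injective_subset_range (ZMod.chineseRemainder hcop).injective
      (by simp)
    _ = 2 ^ (k + l) * (q + r - 1) := by
      zify [show 1 ≤ q + r by have := hq.pos; omega] at hcount ⊢
      rw [pow_add]
      linear_combination hcount

theorem stmt_19 (s p k l q r : ℕ) (hs : s.Prime) (hp : p.Prime) (hsp : s ≠ p)
    (hk : 1 ≤ k) (hl : 1 ≤ l) (hq : Odd q) (hr : Odd r)
    (hseq : s = 2 ^ k * q + 1) (hpeq : p = 2 ^ l * r + 1) :
    {w : ZMod (s*p) | IsUnit w ∧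
      ((∃ i : ℕ, (modS s p w) ^ (2 ^ i) = 1) ∨
       (∃ j : ℕ, (modP s p w) ^ (2 ^ j) = 1))}.ncard
      = 2 ^ (k + l) * (q + r - 1) :=
  stmt_19_general s p k l q r hs hp hsp hq hr hseq hpeq
end
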